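/- (Appendix Lemma 1.) Let φ be any DL-PA formula and let v, v₁ ⊆ 𝒫 be valuations with (v, v₁) ∈ ‖copy(IN_U); vary(IN_U); φ?‖. Then E(v) = {x ∈ U : in'_x ∈ v₁}, A_v = A_{v₁} and R_v = R_{v₁}. -/

import Mathlib

noncomputable section

namespace DLPA

/-- Propositional variables: awareness, acceptance, attack, auxiliary acceptance
copies, plus countably many further auxiliary variables. -/
inductive PVar (U : Type) : Type
  | aw : U → PVar U
  | inn : U → PVar U
  | att : U → U → PVar U
  | inn' : U → PVar U
  | aux : Nat → PVar U

-- DL-PA formulas and programs, by mutual recursion.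
mutual
  inductive Form (U : Type) : Type
    | var : PVar U → Form U
    | neg : Form U → Form U
    | conj : Form U → Form U → Form U
    | box : Prog U → Form U → Form U
  inductive Prog (U : Type) : Type
    | add : PVar U → Prog U           -- +p
    | rem : PVar U → Prog U           -- −p
    | test : Form U → Prog U          -- φ?
    | seq : Prog U → Prog U → Prog U
    | choice : Prog U → Prog U → Prog U
    | conv : Prog U → Prog U
end

variable {U : Type}

/-- A valuation is a set of propositional variables. -/
abbrev Val (U : Type) := Set (PVar U)

-- Satisfaction of formulas and interpretation of programs, by mutual recursion.
mutual
  def Sat : Val U → Form U → Prop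
    | v, Form.var p => p ∈ v
    | v, Form.neg φ => ¬ Sat v φ
    | v, Form.conj φ ψ => Sat v φ ∧ Sat v ψ
    | v, Form.box π φ => ∀ w, Rel π v w → Sat w φ
  def Rel : Prog U → Val U → Val U → Prop
    | Prog.add p, v, w => w = v ∪ {p}
    | Prog.rem p, v, w => w = v \ {p}
    | Prog.test φ, v, w => w = v ∧ Sat v φ
    | Prog.seq π₁ π₂, v, w => ∃ u, Rel π₁ v u ∧ Rel π₂ u w
    | Prog.choice π₁ π₂, v, w => Rel π₁ v w ∨ Rel π₂ v w
    | Prog.conv π, v, w => Rel π w v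
end

def Form.falsum : Form U := Form.conj (Form.var (PVar.aux 0)) (Form.neg (Form.var (PVar.aux 0)))
def Form.top : Form U := Form.neg Form.falsum
def Form.impl (φ ψ : Form U) : Form U := Form.neg (Form.conj φ (Form.neg ψ))
def Form.disj (φ ψ : Form U) : Form U := Form.neg (Form.conj (Form.neg φ) (Form.neg ψ))
def Form.equiv (φ ψ : Form U) : Form U := Form.conj (Form.impl φ ψ) (Form.impl ψ φ)
def Form.dia (π : Prog U) (φ : Form U) : Form U := Form.neg (Form.box π (Form.neg φ))
def Prog.skip : Prog U := Prog.test Form.top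

/-- Sequential composition of a list of programs (`skip` for the empty list). -/
def seqList {β : Type} (f : β → Prog U) : List β → Prog U
  | [] => Prog.skip
  | p :: ps => Prog.seq (f p) (seqList f ps)

/-- Nondeterministic composition of a list of programs (`skip` for the empty list). -/
def unionList {β : Type} (f : β → Prog U) : List β → Prog U
  | [] => Prog.skip
  | [p] => f p
  | p :: ps => Prog.choice (f p) (unionList f ps)

def mkTrueOne (L : List (PVar U)) : Prog U :=
  unionList (fun p => Prog.seq (Prog.test (Form.neg (Form.var p))) (Prog.add p)) L
def mkFalseOne (L : List (PVar U)) : Prog U :=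
  unionList (fun p => Prog.seq (Prog.test (Form.var p)) (Prog.rem p)) L
def mkTrueSome (L : List (PVar U)) : Prog U :=
  seqList (fun p => Prog.choice (Prog.add p) Prog.skip) L
def mkFalseSome (L : List (PVar U)) : Prog U :=
  seqList (fun p => Prog.choice (Prog.rem p) Prog.skip) L
def vary (L : List (PVar U)) : Prog U :=
  seqList (fun p => Prog.choice (Prog.add p) (Prog.rem p)) L
/-- dis(ATT_R): for each pair (x,y) in the list, make true att_{x,y} or att_{y,x}. -/
def dis (L : List (U × U)) : Prog U :=
  seqList (fun q => Prog.choice (Prog.add (PVar.att q.1 q.2)) (Prog.add (PVar.att q.2 q.1))) L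

def conjList : List (Form U) → Form U
  | [] => Form.top
  | φ :: φs => Form.conj φ (conjList φs)
def disjList : List (Form U) → Form U
  | [] => Form.falsum
  | φ :: φs => Form.disj φ (disjList φs)

/-- The elements of a finite universe in a fixed order. -/
def enum (U : Type) [Fintype U] : List U := Finset.univ.toList

def bigConj [Fintype U] (f : U → Form U) : Form U := conjList ((enum U).map f)
def bigDisj [Fintype U] (f : U → Form U) : Form U := disjList ((enum U).map f)

def INlist (U : Type) [Fintype U] : List (PVar U) := (enum U).map PVar.inn

/-- copy(IN_U) copies the value of in_x to in'_x, for every x ∈ U. -/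
def copyIN (U : Type) [Fintype U] : Prog U :=
  seqList (fun x => Prog.choice
      (Prog.seq (Prog.test (Form.var (PVar.inn x))) (Prog.add (PVar.inn' x)))
      (Prog.seq (Prog.test (Form.neg (Form.var (PVar.inn x)))) (Prog.rem (PVar.inn' x))))
    (enum U)

def Well (U : Type) [Fintype U] : Form U :=
  bigConj (fun x => Form.impl (Form.var (PVar.inn x)) (Form.var (PVar.aw x)))

def ConFree (U : Type) [Fintype U] : Form U :=
  Form.conj (Well U) (bigConj fun x => bigConj fun y =>
    Form.neg (Form.conj (Form.var (PVar.inn x))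
      (Form.conj (Form.var (PVar.inn y)) (Form.var (PVar.att x y)))))

def AdmissibleF (U : Type) [Fintype U] : Form U :=
  Form.conj (ConFree U) (bigConj fun x => Form.impl (Form.var (PVar.inn x))
    (bigConj fun y => Form.impl (Form.conj (Form.var (PVar.aw y)) (Form.var (PVar.att y x)))
      (bigDisj fun z => Form.conj (Form.var (PVar.inn z)) (Form.var (PVar.att z y)))))

def StableF (U : Type) [Fintype U] : Form U :=
  Form.conj (Well U) (bigConj fun x => Form.impl (Form.var (PVar.aw x))
    (Form.equiv (Form.var (PVar.inn x))
      (Form.neg (bigDisj fun y => Form.conj (Form.var (PVar.inn y)) (Form.var (PVar.att y x))))))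

def CompleteF (U : Type) [Fintype U] : Form U :=
  Form.conj (ConFree U) (bigConj fun x => Form.equiv (Form.var (PVar.inn x))
    (bigConj fun y => Form.impl (Form.conj (Form.var (PVar.aw y)) (Form.var (PVar.att y x)))
      (bigDisj fun z => Form.conj (Form.var (PVar.inn z)) (Form.var (PVar.att z y)))))

def GroundedF (U : Type) [Fintype U] : Form U :=
  Form.conj (CompleteF U)
    (Form.box (Prog.seq (mkFalseOne (INlist U)) (mkFalseSome (INlist U))) (Form.neg (CompleteF U)))

def PreferredF (U : Type) [Fintype U] : Form U :=
  Form.conj (AdmissibleF U)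
    (Form.box (Prog.seq (mkTrueOne (INlist U)) (mkTrueSome (INlist U))) (Form.neg (AdmissibleF U)))

def NaiveF (U : Type) [Fintype U] : Form U :=
  Form.conj (ConFree U) (Form.box (mkTrueOne (INlist U)) (Form.neg (ConFree U)))

def IncludedInCp (U : Type) [Fintype U] : Form U :=
  bigConj fun x => Form.impl
    (Form.disj (Form.var (PVar.inn x)) (Form.conj (Form.var (PVar.aw x))
      (bigDisj fun y => Form.conj (Form.var (PVar.inn y)) (Form.var (PVar.att y x)))))
    (Form.disj (Form.var (PVar.inn' x)) (Form.conj (Form.var (PVar.aw x))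
      (bigDisj fun y => Form.conj (Form.var (PVar.inn' y)) (Form.var (PVar.att y x)))))

def IncludesCp (U : Type) [Fintype U] : Form U :=
  bigConj fun x => Form.impl
    (Form.disj (Form.var (PVar.inn' x)) (Form.conj (Form.var (PVar.aw x))
      (bigDisj fun y => Form.conj (Form.var (PVar.inn' y)) (Form.var (PVar.att y x)))))
    (Form.disj (Form.var (PVar.inn x)) (Form.conj (Form.var (PVar.aw x))
      (bigDisj fun y => Form.conj (Form.var (PVar.inn y)) (Form.var (PVar.att y x)))))

/-- makeExt^σ = vary(IN_U); φ_σ? -/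
def makeExt (U : Type) [Fintype U] (φ : Form U) : Prog U :=
  Prog.seq (vary (INlist U)) (Prog.test φ)

def SemiStableF (U : Type) [Fintype U] : Form U :=
  Form.conj (CompleteF U)
    (Form.box (Prog.seq (copyIN U) (makeExt U (CompleteF U)))
      (Form.impl (IncludesCp U) (IncludedInCp U)))

/-- A_v -/
def Av (v : Val U) : Set U := {x | PVar.aw x ∈ v}
/-- R_v -/
def Rv (v : Val U) : Set (U × U) := {q | q.1 ∈ Av v ∧ q.2 ∈ Av v ∧ PVar.att q.1 q.2 ∈ v}
/-- E(v) -/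
def Ev (v : Val U) : Set U := {x | PVar.inn x ∈ v}
/-- {x ∈ U : in'_x ∈ v} -/
def Cv (v : Val U) : Set U := {x | PVar.inn' x ∈ v}
/-- v_(A,R) = AW_A ∪ ATT_R -/
def valOf (A : Set U) (R : Set (U × U)) : Val U :=
  (PVar.aw '' A) ∪ ((fun q : U × U => PVar.att q.1 q.2) '' R)

/-- E⁺, the set of arguments of A attacked by E in (A,R). -/
def attacked (A : Set U) (R : Set (U × U)) (E : Set U) : Set U :=
  {x ∈ A | ∃ y ∈ E, (y, x) ∈ R}
/-- E⊕ = E ∪ E⁺, the range of E. -/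
def rangeOf (A : Set U) (R : Set (U × U)) (E : Set U) : Set U :=
  E ∪ attacked A R E

def IsConflictFree (A : Set U) (R : Set (U × U)) (E : Set U) : Prop :=
  E ⊆ A ∧ E ∩ attacked A R E = ∅
def Defends (A : Set U) (R : Set (U × U)) (E : Set U) (a : U) : Prop :=
  ∀ x ∈ A, (x, a) ∈ R → x ∈ attacked A R E
def IsAdmissibleExt (A : Set U) (R : Set (U × U)) (E : Set U) : Prop :=
  IsConflictFree A R E ∧ ∀ a ∈ E, Defends A R E a
def IsStableExt (A : Set U) (R : Set (U × U)) (E : Set U) : Prop :=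
  IsConflictFree A R E ∧ A \ E ⊆ attacked A R E
def IsCompleteExt (A : Set U) (R : Set (U × U)) (E : Set U) : Prop :=
  IsConflictFree A R E ∧ E = {a ∈ A | Defends A R E a}
def IsGroundedExt (A : Set U) (R : Set (U × U)) (E : Set U) : Prop :=
  IsCompleteExt A R E ∧ ∀ E', IsCompleteExt A R E' → E' ⊆ E → E' = E
def IsPreferredExt (A : Set U) (R : Set (U × U)) (E : Set U) : Prop :=
  IsCompleteExt A R E ∧ ∀ E', IsCompleteExt A R E' → E ⊆ E' → E' = E
def IsNaiveExt (A : Set U) (R : Set (U × U)) (E : Set U) : Prop :=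
  IsConflictFree A R E ∧ ∀ E', IsConflictFree A R E' → E ⊆ E' → E' = E
def IsSemiStableExt (A : Set U) (R : Set (U × U)) (E : Set U) : Prop :=
  IsCompleteExt A R E ∧ ¬ ∃ E', IsCompleteExt A R E' ∧ rangeOf A R E ⊂ rangeOf A R E'

end DLPA

end

/-!
The step of `copy(IN_U)` for `x` writes only `in'_x`, setting it to the value of `in_x`, and
`vary(IN_U)` writes only acceptance variables. So awareness and attack variables are untouched, and
`in'_x` ends up holding the value `in_x` had in `v`.
-/

namespace DLPA

variable {U : Type}

def Prog.Preserves (π : Prog U) (p : PVar U) : Prop :=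
  ∀ v w, Rel π v w → (p ∈ w ↔ p ∈ v)

theorem eq_of_rel_skip {v w : Val U} (h : Rel Prog.skip v w) : w = v := by
  simp only [Prog.skip, Rel] at h
  exact h.1

theorem Prog.Preserves.seq {π₁ π₂ : Prog U} {p : PVar U} (h₁ : π₁.Preserves p)
    (h₂ : π₂.Preserves p) : (Prog.seq π₁ π₂).Preserves p := by
  rintro v w ⟨u, hvu, huw⟩
  exact (h₂ u w huw).trans (h₁ v u hvu)

theorem preserves_seqList {β : Type} (f : β → Prog U) (p : PVar U) :
    ∀ l : List β, (∀ a ∈ l, (f a).Preserves p) → (seqList f l).Preserves p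
  | [], _ => fun v w h => by rw [eq_of_rel_skip h]
  | a :: l, hl => Prog.Preserves.seq (hl a List.mem_cons_self)
      (preserves_seqList f p l fun b hb => hl b (List.mem_cons_of_mem a hb))

theorem preserves_vary {L : List (PVar U)} {p : PVar U} (hp : p ∉ L) : (vary L).Preserves p :=
  preserves_seqList _ p L fun q hq => by
    have hpq : p ≠ q := fun e => hp (e ▸ hq)
    rintro v w (rfl | rfl) <;> simp [hpq]

def copyStep (x : U) : Prog U :=
  Prog.choice
    (Prog.seq (Prog.test (Form.var (PVar.inn x))) (Prog.add (PVar.inn' x)))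
    (Prog.seq (Prog.test (Form.neg (Form.var (PVar.inn x)))) (Prog.rem (PVar.inn' x)))

theorem copyIN_eq (U : Type) [Fintype U] : copyIN U = seqList copyStep (enum U) := rfl

theorem copyStep_preserves {x : U} {p : PVar U} (hp : p ≠ PVar.inn' x) :
    (copyStep x).Preserves p := by
  rintro v w (⟨u, ⟨rfl, -⟩, rfl⟩ | ⟨u, ⟨rfl, -⟩, rfl⟩) <;> simp [hp]

theorem inn'_mem_of_rel_copyStep {x : U} {v w : Val U} (h : Rel (copyStep x) v w) :
    PVar.inn' x ∈ w ↔ PVar.inn x ∈ v := by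
  rcases h with ⟨u, ⟨rfl, hx⟩, rfl⟩ | ⟨u, ⟨rfl, hx⟩, rfl⟩ <;> simp_all [Sat]

theorem inn'_mem_of_rel_seqList_copyStep {L : List U} {v w : Val U}
    (h : Rel (seqList copyStep L) v w) {x : U} (hx : x ∈ L) :
    PVar.inn' x ∈ w ↔ PVar.inn x ∈ v := by
  induction L generalizing v with
  | nil => simp at hx
  | cons a L ih =>
    obtain ⟨u, hstep, hrest⟩ := h
    by_cases hxL : x ∈ L
    · exact (ih hrest hxL).trans (copyStep_preserves (by simp) v u hstep)
    · obtain rfl : x = a := by simpa [hxL] using hx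
      have hrest_pres : (seqList copyStep L).Preserves (PVar.inn' x) :=
        preserves_seqList _ _ L fun y hy => copyStep_preserves (by rintro ⟨⟩; exact hxL hy)
      exact (hrest_pres u w hrest).trans (inn'_mem_of_rel_copyStep hstep)

end DLPA

open DLPA in
/-- Appendix Lemma 1. -/
theorem copy_vary_test_lemma
    (U : Type) [Fintype U] [Nonempty U] (φ : Form U) (v v₁ : Val U)
    (h : Rel (Prog.seq (copyIN U) (Prog.seq (vary (INlist U)) (Prog.test φ))) v v₁) :
    Ev v = Cv v₁ ∧ Av v = Av v₁ ∧ Rv v = Rv v₁ := by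
  obtain ⟨u, hcopy, _, hvary, rfl, -⟩ := h
  rw [copyIN_eq] at hcopy
  have hframe : ∀ p, (∀ y, p ≠ PVar.inn y) → (∀ y, p ≠ PVar.inn' y) → (p ∈ v₁ ↔ p ∈ v) :=
    fun p hinn hinn' =>
      (preserves_vary (by simpa [INlist] using fun y _ e => hinn y e.symm) u v₁ hvary).trans
        (preserves_seqList _ p _ (fun y _ => copyStep_preserves (hinn' y)) v u hcopy)
  refine ⟨?_, ?_, ?_⟩
  · ext x
    have hx : x ∈ enum U := by simp [enum]
    exact ((preserves_vary (by simp [INlist]) u v₁ hvary).trans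
      (inn'_mem_of_rel_seqList_copyStep hcopy hx)).symm
  · ext x
    exact (hframe (PVar.aw x) (by simp) (by simp)).symm
  · ext ⟨x, y⟩
    simp only [Rv, Av, Set.mem_ofPred_eq]
    rw [hframe (PVar.aw x) (by simp) (by simp), hframe (PVar.aw y) (by simp) (by simp),
      hframe (PVar.att x y) (by simp) (by simp)]
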